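/- arXiv:1504.02343 — 6 statements merged into one kernel-verified Lean document; each statement's English description precedes it below -/
import Mathlib

section
/- Let G be a group and M a simple and faithful G-module (an abelian group with G-action that is simple as a G-module and on which G acts faithfully). Let n ≥ 1 and form the semidirect product M^n ⋊ G with G acting diagonally. Then for every normal subgroup H of M^n ⋊ G, either M^n ⊆ H or H ⊆ M^n. -/
/-!
Suppose `H` is not contained in `Mⁿ`, so it has an element `x` whose `G`-component `g` is
nontrivial. Commutators of `x` with `w ∈ Mⁿ` show that `H ∩ Mⁿ` contains every `w - g • w`.
By faithfulness some `m` has `m - g • m ≠ 0`, so for each coordinate `i` the `G`-submodule of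
those `a : M` with `Pi.single i a ∈ H` is nonzero, hence all of `M` by simplicity. These
single-coordinate vectors generate `Mⁿ`.
-/

namespace SemidirectProduct

variable {N G : Type*} [CommGroup N] [Group G] {φ : G →* MulAut N}

theorem inl_mul_inv_aut_mem {H : Subgroup (N ⋊[φ] G)} (hH : H.Normal) {x : N ⋊[φ] G}
    (hx : x ∈ H) (n : N) : inl (n * (φ x.right n)⁻¹) ∈ H := by
  convert H.mul_mem (hH.conj_mem x hx (inl n)) (H.inv_mem hx) using 1
  ext
  · simp [mul_comm, mul_left_comm]
  · simp

end SemidirectProduct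

namespace AddSubgroup

variable {G M ι : Type*} [Group G] [AddCommGroup M] [DistribMulAction G M]
  [Fintype ι] [DecidableEq ι]

theorem eq_top_of_sub_smul_mem
    (hsimple : ∀ N : AddSubgroup M, (∀ (g : G) (m : M), m ∈ N → g • m ∈ N) → N = ⊥ ∨ N = ⊤)
    {K : AddSubgroup (ι → M)} (hK : ∀ (g : G) (v : ι → M), v ∈ K → g • v ∈ K)
    {g : G} (hg : ∃ m : M, g • m ≠ m) (hsub : ∀ v : ι → M, v - g • v ∈ K) : K = ⊤ := by
  have hsingle (i : ι) (a : M) : Pi.single i a ∈ K := by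
    let Ki := K.comap (AddMonoidHom.single (fun _ => M) i)
    have hKi : Ki ≠ ⊥ := by
      obtain ⟨m, hm⟩ := hg
      have hmem : m - g • m ∈ Ki := by
        simpa [Ki, Pi.single_sub, Pi.single_smul'] using hsub (Pi.single i m)
      intro hbot
      rw [hbot, mem_bot, sub_eq_zero] at hmem
      exact hm hmem.symm
    have hstable (k : G) (a : M) (ha : a ∈ Ki) : k • a ∈ Ki := by
      simpa [Ki, Pi.single_smul'] using hK k _ ha
    exact (((hsimple Ki hstable).resolve_left hKi).symm ▸ mem_top a : a ∈ Ki)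
  refine eq_top_iff.2 fun v _ => ?_
  rw [← Finset.univ_sum_single v]
  exact sum_mem fun i _ => hsingle i (v i)

end AddSubgroup

theorem stmt0_general (G M : Type*) [Group G] [AddCommGroup M] [DistribMulAction G M]
    (hfaithful : FaithfulSMul G M)
    (hsimple : ∀ N : AddSubgroup M, (∀ (g : G) (m : M), m ∈ N → g • m ∈ N) → N = ⊥ ∨ N = ⊤)
    (n : ℕ)
    (φ : G →* MulAut (Multiplicative (Fin n → M)))
    (hφ : ∀ (g : G) (v : Fin n → M) (i : Fin n),
      Multiplicative.toAdd (φ g (Multiplicative.ofAdd v)) i = g • (v i))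
    (H : Subgroup (Multiplicative (Fin n → M) ⋊[φ] G)) (hH : H.Normal) :
    (SemidirectProduct.inl.range ≤ H) ∨ (H ≤ SemidirectProduct.inl.range) := by
  refine (em (H ≤ SemidirectProduct.inl.range)).symm.imp_left fun hnot => ?_
  obtain ⟨x, hxH, hx⟩ := SetLike.not_le_iff_exists.1 hnot
  have hg : x.right ≠ 1 := by
    simpa [SemidirectProduct.range_inl_eq_ker_rightHom] using hx
  have hmoved : ∃ m : M, x.right • m ≠ m := by
    contrapose! hg
    exact hfaithful.eq_of_smul_eq_smul (by simpa using hg)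
  have hφ_ofAdd (g : G) (v : Fin n → M) : φ g (.ofAdd v) = .ofAdd (g • v) :=
    Multiplicative.toAdd.injective (funext (hφ g v))
  let K := Subgroup.toAddSubgroup' (H.comap SemidirectProduct.inl)
  have hK : K = ⊤ := by
    refine AddSubgroup.eq_top_of_sub_smul_mem hsimple (fun g v hv => ?_) hmoved fun v => ?_
    · have hv : SemidirectProduct.inl (Multiplicative.ofAdd v) ∈ H := hv
      have := hH.conj_mem _ hv (.inr g)
      rwa [← map_inv, ← SemidirectProduct.inl_aut, hφ_ofAdd] at this
    · simpa [K, hφ_ofAdd, sub_eq_add_neg] using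
        SemidirectProduct.inl_mul_inv_aut_mem hH hxH (.ofAdd v)
  rintro _ ⟨v, rfl⟩
  exact (hK ▸ AddSubgroup.mem_top _ : Multiplicative.toAdd v ∈ K)

/-- Let `G` be a group and `M` a simple and faithful `G`-module.
For `n ≥ 1` form the semidirect product `Mⁿ ⋊ G` (with `G` acting diagonally on `Mⁿ`,
encoded by the hypothesis `hφ`).  Then every normal subgroup `H` of `Mⁿ ⋊ G`
either contains `Mⁿ` or is contained in `Mⁿ`. -/
theorem stmt0 (G M : Type*) [Group G] [AddCommGroup M] [DistribMulAction G M]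
    (hfaithful : FaithfulSMul G M) (hMnt : Nontrivial M)
    (hsimple : ∀ N : AddSubgroup M, (∀ (g : G) (m : M), m ∈ N → g • m ∈ N) → N = ⊥ ∨ N = ⊤)
    (n : ℕ) (hn : 1 ≤ n)
    (φ : G →* MulAut (Multiplicative (Fin n → M)))
    (hφ : ∀ (g : G) (v : Fin n → M) (i : Fin n),
      Multiplicative.toAdd (φ g (Multiplicative.ofAdd v)) i = g • (v i))
    (H : Subgroup (Multiplicative (Fin n → M) ⋊[φ] G)) (hH : H.Normal) :
    (SemidirectProduct.inl.range ≤ H) ∨ (H ≤ SemidirectProduct.inl.range) :=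
  stmt0_general G M hfaithful hsimple n φ hφ H hH
end

section
/- Let m ≥ 3 be odd. Then the first group cohomology H^1(S_m, M) of the symmetric group S_m with coefficients in the zero-sum submodule M ⊂ (F_2)^m vanishes. -/
/-!
A 1-cocycle `c` of `Sₘ` with values in `(F₂)^m` takes, on a transposition `(a b)`, one and the
same value `ε` at every point other than `a` and `b`: conjugating by a transposition that fixes
`a` and `b` moves that point anywhere else. Because `c (a b) a = -c (a b) b`, the coordinates of
`c (a b)` sum to `(m - 2) ε`, which is `ε` for odd `m`; so the zero-sum condition forces `ε = 0`.
A cocycle vanishing off the support of every transposition is the coboundary of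
`v i = c (i₀ i) i₀`: this is checked on transpositions and propagates to all of `Sₘ` because
transpositions generate it.
-/

open Equiv

variable {α M : Type*} [AddCommGroup M]

def IsPermCocycle (c : Perm α → α → M) : Prop :=
  ∀ g h j, c (g * h) j = c g j + c h (g⁻¹ j)

def swapPotential [DecidableEq α] (c : Perm α → α → M) (i₀ i : α) : M :=
  c (swap i₀ i) i₀

namespace IsPermCocycle

variable {c : Perm α → α → M} (hc : IsPermCocycle c)
include hc

theorem map_one (j : α) : c 1 j = 0 := by
  simpa using hc 1 1 j

theorem map_inv_apply (g : Perm α) (j : α) : c g⁻¹ j = -c g (g j) := by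
  have h := hc g⁻¹ g j
  rw [inv_mul_cancel, hc.map_one, inv_inv] at h
  exact eq_neg_of_add_eq_zero_left h.symm

variable [DecidableEq α]

theorem map_swap_apply_right (a b : α) : c (swap a b) b = -c (swap a b) a := by
  simpa using hc.map_inv_apply (swap a b) b

theorem map_swap_conj_apply (g : Perm α) {a b j : α} (hja : j ≠ a) (hjb : j ≠ b) :
    c (swap (g a) (g b)) (g j) = c (swap a b) j := by
  have hfix : swap a b j = j := swap_apply_of_ne_of_ne hja hjb
  rw [swap_apply_apply, hc, hc, hc.map_inv_apply]
  simp [hfix]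

theorem map_swap_apply_eq (a b : α) {j k : α} (hja : j ≠ a) (hjb : j ≠ b) (hka : k ≠ a)
    (hkb : k ≠ b) : c (swap a b) j = c (swap a b) k := by
  have h := hc.map_swap_conj_apply (swap j k) hja hjb
  rw [swap_apply_of_ne_of_ne hja.symm hka.symm, swap_apply_of_ne_of_ne hjb.symm hkb.symm,
    swap_apply_left] at h
  exact h.symm

theorem sum_map_swap_add_two_nsmul [Fintype α] {a b j : α} (hab : a ≠ b) (hja : j ≠ a)
    (hjb : j ≠ b) :
    ∑ i, c (swap a b) i + 2 • c (swap a b) j = Fintype.card α • c (swap a b) j := by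
  have hoff : ∑ i, (c (swap a b) i - c (swap a b) j) = -(2 • c (swap a b) j) := by
    rw [Fintype.sum_eq_add a b hab, hc.map_swap_apply_right]
    · abel
    · rintro i ⟨hia, hib⟩
      rw [hc.map_swap_apply_eq a b hia hib hja hjb, sub_self]
  rw [Finset.sum_sub_distrib, Finset.sum_const, Finset.card_univ] at hoff
  rw [sub_eq_iff_eq_add.mp hoff]
  abel

theorem swapPotential_self (i₀ : α) : swapPotential c i₀ i₀ = 0 := by
  rw [swapPotential, swap_self, ← Perm.one_def, hc.map_one]

section Coboundary

variable (hoff : ∀ a b j, j ≠ a → j ≠ b → c (swap a b) j = 0) (i₀ : α)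
include hoff

theorem map_swap_apply_left_of_vanishing (a b : α) :
    c (swap a b) a = swapPotential c i₀ b - swapPotential c i₀ a := by
  have hv₀ := hc.swapPotential_self i₀
  by_cases hab : a = b
  · rw [hab, swap_self, ← Perm.one_def, hc.map_one, sub_self]
  by_cases ha : a = i₀
  · rw [ha, hv₀, sub_zero, swapPotential]
  by_cases hb : b = i₀
  · rw [hb, hv₀, zero_sub, swapPotential, swap_comm, ← hc.map_swap_apply_right]
  -- `(a b) = (i₀ a) (b i₀) (i₀ a)`, and the three cocycle terms at `a` are `-v a`, `v b` and `0`.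
  rw [← swap_mul_swap_mul_swap hb (Ne.symm hab), hc, hc, hc.map_swap_apply_right, swapPotential,
    swapPotential]
  simp only [swap_comm b i₀, swap_inv, swap_apply_right, mul_inv_rev, Perm.coe_mul,
    Function.comp_apply, swap_apply_left, hoff i₀ a b hb (Ne.symm hab), add_zero]
  abel

theorem map_swap_apply_of_vanishing (a b j : α) :
    c (swap a b) j = swapPotential c i₀ (swap a b j) - swapPotential c i₀ j := by
  by_cases hja : j = a
  · rw [hja, swap_apply_left, hc.map_swap_apply_left_of_vanishing hoff]
  by_cases hjb : j = b
  · rw [hjb, swap_apply_right, hc.map_swap_apply_right,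
      hc.map_swap_apply_left_of_vanishing hoff, neg_sub]
  rw [swap_apply_of_ne_of_ne hja hjb, hoff a b j hja hjb, sub_self]

theorem eq_comp_inv_sub_of_vanishing [Finite α] (g : Perm α) :
    c g = swapPotential c i₀ ∘ ⇑g⁻¹ - swapPotential c i₀ := by
  induction g using Perm.swap_induction_on with
  | one => ext j; simp [hc.map_one]
  | swap_mul f a b _ ih =>
    ext j
    rw [hc, hc.map_swap_apply_of_vanishing hoff, ih]
    simp only [Pi.sub_apply, Function.comp_apply, mul_inv_rev, swap_inv, Perm.coe_mul]
    abel

end Coboundary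

end IsPermCocycle

theorem IsPermCocycle.map_swap_apply_eq_zero_of_odd [DecidableEq α] [Fintype α]
    {c : Perm α → α → ZMod 2} (hc : IsPermCocycle c) (hodd : Odd (Fintype.card α))
    (hsum : ∀ a b, ∑ i, c (swap a b) i = 0) (a b j : α) (hja : j ≠ a) (hjb : j ≠ b) :
    c (swap a b) j = 0 := by
  by_cases hab : a = b
  · rw [hab, swap_self, ← Perm.one_def, hc.map_one]
  have h := hc.sum_map_swap_add_two_nsmul hab hja hjb
  simpa [hsum, hodd.natCast_zmod_two, CharTwo.two_eq_zero, eq_comm] using h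

theorem stmt3_general (m : ℕ) (hodd : Odd m)
    (c : Equiv.Perm (Fin m) → (Fin m → ZMod 2))
    (hmem : ∀ g, ∑ i, c g i = 0)
    (hcoc : ∀ g h, c (g * h) = c g + (c h) ∘ ⇑g⁻¹) :
    ∃ v : Fin m → ZMod 2, (∑ i, v i = 0) ∧ ∀ g, c g = v ∘ ⇑g⁻¹ - v := by
  have hc : IsPermCocycle c := fun g h j => congrFun (hcoc g h) j
  have hoff := hc.map_swap_apply_eq_zero_of_odd (by rwa [Fintype.card_fin]) fun a b => hmem _
  have i₀ : Fin m := ⟨0, hodd.pos⟩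
  set v := swapPotential c i₀
  -- Shifting `v` by the constant `∑ v` keeps its coboundary and, as `m` is odd, makes it zero-sum.
  refine ⟨fun i => v i + ∑ k, v k, ?_, fun g => ?_⟩
  · rw [Finset.sum_add_distrib, Finset.sum_const, Finset.card_univ, Fintype.card_fin,
      nsmul_eq_mul, hodd.natCast_zmod_two, one_mul, CharTwo.add_self_eq_zero]
  · rw [hc.eq_comp_inv_sub_of_vanishing hoff i₀ g]
    ext j
    simp [v]

/-- For odd `m ≥ 3`, `H¹(Sₘ, M) = 0` for the zero-sum module
`M ⊂ (F₂)^m`: every 1-cocycle `c : Sₘ → M` (for the action `(g • v) i = v (g⁻¹ i)`,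
i.e. `g • v = v ∘ g⁻¹`) is a coboundary. -/
theorem stmt3 (m : ℕ) (hm : 3 ≤ m) (hodd : Odd m)
    (c : Equiv.Perm (Fin m) → (Fin m → ZMod 2))
    (hmem : ∀ g, ∑ i, c g i = 0)
    (hcoc : ∀ g h, c (g * h) = c g + (c h) ∘ ⇑g⁻¹) :
    ∃ v : Fin m → ZMod 2, (∑ i, v i = 0) ∧ ∀ g, c g = v ∘ ⇑g⁻¹ - v :=
  stmt3_general m hodd c hmem hcoc
end

section
/- Let m ≥ 3 be odd and let M ⊂ (F_2)^m be the zero-sum submodule for the S_m-action by permutation of coordinates. If g ∈ S_m is an (m−1)-cycle, then the coinvariants M/(g−1)M have F_2-dimension 1; if h ∈ S_m is an m-cycle, then M/(h−1)M = 0. -/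
/-- The linear endomorphism `g - 1` of `(F₂)^m`, where `g ∈ Sₘ` acts by
`(g • v) i = v (g⁻¹ i)`. -/
def permSubOne (m : ℕ) (g : Equiv.Perm (Fin m)) :
    (Fin m → ZMod 2) →ₗ[ZMod 2] (Fin m → ZMod 2) :=
  LinearMap.funLeft (ZMod 2) (ZMod 2) ⇑g⁻¹ - LinearMap.id

/-!
The image of `σ - 1` lies in the zero-sum module `M`, and a `σ`-invariant vector is constant
on the support of a cycle `σ`, so rank–nullity bounds the rank of `σ - 1` from below by
`#σ.support - 1`. For an `m`-cycle `h` this equals `m - 1 = dim M`, so `(h - 1)(F₂)^m = M`; for an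
`(m-1)`-cycle `g` fixing `a` the image also lies in `{v | v a = 0}`, and the dimension count gives
`(g - 1)(F₂)^m = M ∩ {v | v a = 0}`, a hyperplane of `M`. In both cases `(σ - 1)M` is the whole
image, since some `σ`-invariant vector has coordinate sum `1` (the all-ones vector, `m` being odd,
resp. the unit vector at `a`) and so spans `(F₂)^m` together with `M`.
-/

open Module Submodule LinearMap

theorem Equiv.Perm.IsCycle.apply_eq_apply_of_forall_apply_eq {α β : Type*} [Finite α]
    {σ : Equiv.Perm α} (hσ : σ.IsCycle) {v : α → β} (hv : ∀ x, v (σ x) = v x) {x y : α}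
    (hx : σ x ≠ x) (hy : σ y ≠ y) : v x = v y := by
  obtain ⟨k, rfl⟩ := hσ.exists_pow_eq hx hy
  clear hy
  induction k with
  | zero => rfl
  | succ k ih => rw [pow_succ', Equiv.Perm.mul_apply, hv, ih]

theorem Submodule.map_eq_range_of_sup_span_eq_top {R V W : Type*} [Ring R] [AddCommGroup V]
    [AddCommGroup W] [Module R V] [Module R W] (f : V →ₗ[R] W) {p : Submodule R V} {u : V}
    (hu : f u = 0) (hp : p ⊔ R ∙ u = ⊤) : p.map f = range f := by
  rw [range_eq_map, ← hp, map_sup, map_span, Set.image_singleton, hu,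
    span_singleton_eq_bot.mpr rfl, sup_bot_eq]

section ZeroSum

variable {K ι : Type*} [Field K] [Fintype ι] {M : Submodule K (ι → K)}

theorem sup_span_eq_top_of_sum_eq_one (hM : ∀ v, v ∈ M ↔ ∑ i, v i = 0) {u : ι → K}
    (hu : ∑ i, u i = 1) : M ⊔ K ∙ u = ⊤ := by
  refine eq_top_iff'.mpr fun v => mem_sup.mpr ?_
  refine ⟨v - (∑ i, v i) • u, (hM _).mpr ?_, (∑ i, v i) • u, mem_span_singleton.mpr ⟨_, rfl⟩,
    sub_add_cancel _ _⟩
  simp [Finset.sum_sub_distrib, ← Finset.mul_sum, hu]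

theorem finrank_lt_of_sum_eq_one (hM : ∀ v, v ∈ M ↔ ∑ i, v i = 0) {u : ι → K}
    (hu : ∑ i, u i = 1) : finrank K M < Fintype.card ι := by
  rw [← Module.finrank_fintype_fun_eq_card K]
  refine Submodule.finrank_lt fun hM_top => ?_
  exact one_ne_zero (hu.symm.trans ((hM u).mp (hM_top ▸ mem_top)))

theorem inf_ker_proj_lt [DecidableEq ι] (hM : ∀ v, v ∈ M ↔ ∑ i, v i = 0) {a b : ι}
    (hab : a ≠ b) : M ⊓ ker (proj a) < M := by
  refine inf_lt_left.mpr fun h_le => ?_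
  have h_mem : Pi.single a 1 - Pi.single b 1 ∈ M := by simp [hM, Finset.sum_sub_distrib]
  simpa [hab] using h_le h_mem

end ZeroSum

variable {m : ℕ}

theorem permSubOne_apply (σ : Equiv.Perm (Fin m)) (v : Fin m → ZMod 2) (i : Fin m) :
    permSubOne m σ v i = v (σ⁻¹ i) - v i := rfl

theorem permSubOne_eq_zero_iff {σ : Equiv.Perm (Fin m)} {v : Fin m → ZMod 2} :
    permSubOne m σ v = 0 ↔ ∀ i, v (σ i) = v i := by
  simp only [funext_iff, permSubOne_apply, Pi.zero_apply, sub_eq_zero]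
  exact ⟨fun h i => by simpa using (h (σ i)).symm, fun h i => by simpa using (h (σ⁻¹ i)).symm⟩

theorem range_permSubOne_le {M : Submodule (ZMod 2) (Fin m → ZMod 2)}
    (hM : ∀ v, v ∈ M ↔ ∑ i, v i = 0) (σ : Equiv.Perm (Fin m)) : range (permSubOne m σ) ≤ M := by
  rintro _ ⟨v, rfl⟩
  rw [hM]
  simp only [permSubOne_apply, Finset.sum_sub_distrib, Equiv.sum_comp σ⁻¹ v, sub_self]

theorem finrank_ker_permSubOne_le {σ : Equiv.Perm (Fin m)} (hσ : σ.IsCycle) :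
    finrank (ZMod 2) (ker (permSubOne m σ)) ≤ σ.supportᶜ.card + 1 := by
  obtain ⟨b, hb⟩ := hσ.nonempty_support
  set s := insert b σ.supportᶜ
  let restrict : ker (permSubOne m σ) →ₗ[ZMod 2] (s → ZMod 2) :=
    funLeft (ZMod 2) (ZMod 2) Subtype.val ∘ₗ (ker (permSubOne m σ)).subtype
  have h_inj : Function.Injective restrict := by
    refine (injective_iff_map_eq_zero restrict).mpr fun ⟨v, hv⟩ hv0 => ?_
    have hvs : ∀ i ∈ s, v i = 0 := fun i hi => congrFun hv0 ⟨i, hi⟩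
    refine Subtype.ext (funext fun i => ?_)
    show v i = 0
    by_cases hi : i ∈ σ.support
    · rw [hσ.apply_eq_apply_of_forall_apply_eq (permSubOne_eq_zero_iff.mp hv)
        (Equiv.Perm.mem_support.mp hi) (Equiv.Perm.mem_support.mp hb),
        hvs b (Finset.mem_insert_self _ _)]
    · exact hvs i (Finset.mem_insert_of_mem (Finset.mem_compl.mpr hi))
  calc finrank (ZMod 2) (ker (permSubOne m σ)) ≤ finrank (ZMod 2) (s → ZMod 2) :=
        finrank_le_finrank_of_injective h_inj
    _ = σ.supportᶜ.card + 1 := by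
      rw [Module.finrank_fintype_fun_eq_card, Fintype.card_coe,
        Finset.card_insert_of_notMem (by simpa using hb)]

theorem card_support_le_finrank_range_permSubOne {σ : Equiv.Perm (Fin m)} (hσ : σ.IsCycle) :
    σ.support.card ≤ finrank (ZMod 2) (range (permSubOne m σ)) + 1 := by
  have h_rank := finrank_range_add_finrank_ker (permSubOne m σ)
  have h_compl := Finset.card_compl σ.support
  have h_le := σ.support.card_le_univ
  rw [Module.finrank_fin_fun] at h_rank
  rw [Fintype.card_fin] at h_compl h_le
  have := finrank_ker_permSubOne_le hσ
  omega

theorem map_permSubOne_eq_of_card_support_eq {M : Submodule (ZMod 2) (Fin m → ZMod 2)}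
    (hM : ∀ v, v ∈ M ↔ ∑ i, v i = 0) (hodd : Odd m) {h : Equiv.Perm (Fin m)} (hh : h.IsCycle)
    (hcard : h.support.card = m) : M.map (permSubOne m h) = M := by
  have h_one : ∑ i : Fin m, (1 : Fin m → ZMod 2) i = 1 := by
    simpa using hodd.natCast_zmod_two
  rw [map_eq_range_of_sup_span_eq_top _ (permSubOne_eq_zero_iff.mpr fun _ => rfl)
    (sup_span_eq_top_of_sum_eq_one hM h_one)]
  refine eq_of_le_of_finrank_le (range_permSubOne_le hM h) ?_
  have h_M := finrank_lt_of_sum_eq_one hM h_one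
  have h_range := card_support_le_finrank_range_permSubOne hh
  rw [Fintype.card_fin] at h_M
  omega

theorem map_permSubOne_eq_inf_ker_proj {M : Submodule (ZMod 2) (Fin m → ZMod 2)}
    (hM : ∀ v, v ∈ M ↔ ∑ i, v i = 0) {g : Equiv.Perm (Fin m)} (hg : g.IsCycle) {a : Fin m}
    (ha : g.supportᶜ = {a}) : M.map (permSubOne m g) = M ⊓ ker (proj a) := by
  have hga : g a = a :=
    Equiv.Perm.notMem_support.mp (Finset.mem_compl.mp (ha ▸ Finset.mem_singleton_self a))
  have h_single : ∑ i, (Pi.single a 1 : Fin m → ZMod 2) i = 1 := by simp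
  have h_single_ker : permSubOne m g (Pi.single a 1) = 0 :=
    permSubOne_eq_zero_iff.mpr fun i => by simp only [Pi.single_apply, g.injective.eq_iff' hga]
  rw [map_eq_range_of_sup_span_eq_top _ h_single_ker (sup_span_eq_top_of_sum_eq_one hM h_single)]
  have h_le : range (permSubOne m g) ≤ M ⊓ ker (proj a) := by
    refine le_inf (range_permSubOne_le hM g) ?_
    rintro _ ⟨v, rfl⟩
    simp [permSubOne_apply, g.inv_eq_iff_eq.mpr hga.symm]
  refine eq_of_le_of_finrank_le h_le ?_
  obtain ⟨b, hb⟩ := hg.nonempty_support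
  have hab : a ≠ b := by rintro rfl; exact Equiv.Perm.mem_support.mp hb hga
  have h_inf := finrank_lt_finrank_of_lt (inf_ker_proj_lt hM hab)
  have h_M := finrank_lt_of_sum_eq_one hM h_single
  have h_range := card_support_le_finrank_range_permSubOne hg
  have h_compl := Finset.card_compl g.support
  rw [ha, Finset.card_singleton, Fintype.card_fin] at h_compl
  rw [Fintype.card_fin] at h_M
  omega

theorem stmt5_general (m : ℕ) (hodd : Odd m)
    (M : Submodule (ZMod 2) (Fin m → ZMod 2))
    (hM : ∀ v : Fin m → ZMod 2, v ∈ M ↔ ∑ i, v i = 0)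
    (g h : Equiv.Perm (Fin m))
    (hg : g.IsCycle) (hgcard : g.support.card = m - 1)
    (hh : h.IsCycle) (hhcard : h.support.card = m) :
    ((∃ v ∈ M, v ∉ Submodule.map (permSubOne m g) M) ∧
     (∀ v ∈ M, ∀ w ∈ M,
        v ∉ Submodule.map (permSubOne m g) M →
        w ∉ Submodule.map (permSubOne m g) M →
        v - w ∈ Submodule.map (permSubOne m g) M)) ∧
    Submodule.map (permSubOne m h) M = M := by
  obtain ⟨a, ha⟩ : ∃ a, g.supportᶜ = {a} := by
    have := hg.two_le_card_support
    exact Finset.card_eq_one.mp (by rw [Finset.card_compl, hgcard, Fintype.card_fin]; omega)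
  obtain ⟨b, hb⟩ := hg.nonempty_support
  have hab : a ≠ b := by
    rintro rfl
    exact Finset.mem_compl.mp (ha ▸ Finset.mem_singleton_self a) hb
  rw [map_permSubOne_eq_inf_ker_proj hM hg ha,
    map_permSubOne_eq_of_card_support_eq hM hodd hh hhcard]
  refine ⟨⟨SetLike.exists_of_lt (inf_ker_proj_lt hM hab), fun v hv w hw hva hwa => ?_⟩, rfl⟩
  have h_sub : ∀ x y : ZMod 2, x ≠ 0 → y ≠ 0 → x - y = 0 := by decide
  simp only [mem_inf, mem_ker, proj_apply, hv, hw, true_and] at hva hwa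
  exact ⟨sub_mem hv hw, h_sub _ _ hva hwa⟩

/-- For odd `m ≥ 3` and the zero-sum module `M ⊂ (F₂)^m`:
if `g` is an `(m-1)`-cycle then the coinvariants `M/(g-1)M` have `F₂`-dimension 1
(i.e. `(g-1)M` has index 2 in `M`), and if `h` is an `m`-cycle then `M/(h-1)M = 0`
(i.e. `(h-1)M = M`). -/
theorem stmt5 (m : ℕ) (hm : 3 ≤ m) (hodd : Odd m)
    (M : Submodule (ZMod 2) (Fin m → ZMod 2))
    (hM : ∀ v : Fin m → ZMod 2, v ∈ M ↔ ∑ i, v i = 0)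
    (g h : Equiv.Perm (Fin m))
    (hg : g.IsCycle) (hgcard : g.support.card = m - 1)
    (hh : h.IsCycle) (hhcard : h.support.card = m) :
    ((∃ v ∈ M, v ∉ Submodule.map (permSubOne m g) M) ∧
     (∀ v ∈ M, ∀ w ∈ M,
        v ∉ Submodule.map (permSubOne m g) M →
        w ∉ Submodule.map (permSubOne m g) M →
        v - w ∈ Submodule.map (permSubOne m g) M)) ∧
    Submodule.map (permSubOne m h) M = M :=
  stmt5_general m hodd M hM g h hg hgcard hh hhcard
end

section
/- Let Γ be a profinite group, M a finite Γ-module with pM = 0, and let K be the kernel of the action map Γ → Aut(M), with G = Γ/K finite. Assume M is a simple G-module, H^1(G, M) = 0, and End_G(M) = F_q. Let α_1, ..., α_n ∈ H^1(Γ, M) be classes whose restrictions to K (continuous G-equivariant homomorphisms K → M) define a map α̃: K → M^n. If the classes α_1, ..., α_n are linearly independent over F_q in H^1(Γ, M), then the restriction map α̃ induces a surjection from K onto M^n. -/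
/-!
Restricted to `κ`, which acts trivially, each cocycle `αᵢ` is additive and satisfies
`αᵢ (g γ g⁻¹) = g • αᵢ γ`, so the image of `γ ↦ (αᵢ γ)ᵢ` is a `Γ`-stable subgroup of `Mⁿ`.
Since `M` is simple with `End_Γ(M) = K`, a `Γ`-stable subgroup of `Mⁿ` is either everything or
killed by a nonzero form `v ↦ ∑ cᵢ • vᵢ`: by induction on `n`, a stable subgroup projecting onto
`Mⁿ⁻¹` either contains `M × 0` or is the graph of an equivariant map `Mⁿ⁻¹ → M`, whose
coordinates are scalars. In the second case `∑ cᵢ • αᵢ` is a cocycle vanishing on `κ`, hence a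
coboundary because `H¹(G, M) = 0`, contradicting the linear independence of the classes.
-/

section StableSubgroups

variable {Γ M K : Type*} [Monoid Γ] [AddCommGroup M] [DistribMulAction Γ M] [Ring K] [Module K M]

theorem exists_eq_sum_smul_of_map_smul
    (hend : ∀ f : M →+ M, (∀ (g : Γ) (x : M), f (g • x) = g • f x) → ∃ c : K, ∀ x, f x = c • x)
    {ι : Type*} [Fintype ι] [DecidableEq ι] (F : (ι → M) →+ M)
    (hF : ∀ (g : Γ) (v : ι → M), F (g • v) = g • F v) :
    ∃ c : ι → K, ∀ v, F v = ∑ i, c i • v i := by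
  have hcoord : ∀ i, ∃ c : K, ∀ x, F (Pi.single i x) = c • x := fun i =>
    hend (F.comp (AddMonoidHom.single (fun _ => M) i)) fun g x => by
      simp only [AddMonoidHom.comp_apply, AddMonoidHom.single_apply, Pi.single_smul', hF]
  choose c hc using hcoord
  refine ⟨c, fun v => ?_⟩
  conv_lhs => rw [← Finset.univ_sum_single v]
  simp only [map_sum, hc]

variable {n : ℕ}

theorem exists_map_smul_of_tail_surjective (N : AddSubgroup (Fin (n + 1) → M))
    (hN : ∀ (g : Γ) (v : Fin (n + 1) → M), v ∈ N → g • v ∈ N)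
    (hsurj : ∀ u : Fin n → M, ∃ v ∈ N, Fin.tail v = u)
    (hinj : ∀ x : M, Pi.single 0 x ∈ N → x = 0) :
    ∃ F : (Fin n → M) →+ M,
      (∀ (g : Γ) (u : Fin n → M), F (g • u) = g • F u) ∧ ∀ v ∈ N, v 0 = F (Fin.tail v) := by
  choose lift hlift_mem hlift_tail using hsurj
  have hhead : ∀ v ∈ N, v 0 = lift (Fin.tail v) 0 := by
    intro v hv
    set w := v - lift (Fin.tail v)
    have hw : w = Pi.single 0 (w 0) := by
      ext i
      cases i using Fin.cases with
      | zero => simp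
      | succ j =>
        have := congrFun (hlift_tail (Fin.tail v)) j
        simp only [Fin.tail] at this
        simp [w, this]
    simpa [w, sub_eq_zero] using hinj (w 0) (hw ▸ N.sub_mem hv (hlift_mem _))
  refine ⟨AddMonoidHom.mk' (fun u => lift u 0) fun u u' => ?_, fun g u => ?_, hhead⟩
  · have htail : Fin.tail (lift u + lift u') = u + u' :=
      congrArg₂ (· + ·) (hlift_tail u) (hlift_tail u')
    have := hhead _ (N.add_mem (hlift_mem u) (hlift_mem u'))
    rwa [htail, eq_comm] at this
  · have htail : Fin.tail (g • lift u) = g • u := congrArg (g • ·) (hlift_tail u)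
    have := hhead _ (hN g _ (hlift_mem u))
    rwa [htail, eq_comm] at this

theorem eq_top_of_tail_surjective (N : AddSubgroup (Fin (n + 1) → M))
    (hsurj : ∀ u : Fin n → M, ∃ v ∈ N, Fin.tail v = u) (hsingle : ∀ x : M, Pi.single 0 x ∈ N) :
    N = ⊤ := by
  refine eq_top_iff.2 fun v _ => ?_
  obtain ⟨w, hw, htail⟩ := hsurj (Fin.tail v)
  have hv : v = w + Pi.single 0 (v 0 - w 0) := by
    ext i
    cases i using Fin.cases with
    | zero => simp
    | succ j => simpa [Fin.tail] using (congrFun htail j).symm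
  exact hv ▸ N.add_mem hw (hsingle _)

theorem eq_top_or_exists_sum_smul_eq_zero [Nontrivial K]
    (hsimple : ∀ N : AddSubgroup M, (∀ (g : Γ) (x : M), x ∈ N → g • x ∈ N) → N = ⊥ ∨ N = ⊤)
    (hend : ∀ f : M →+ M, (∀ (g : Γ) (x : M), f (g • x) = g • f x) → ∃ c : K, ∀ x, f x = c • x) :
    ∀ {n : ℕ} (N : AddSubgroup (Fin n → M)), (∀ (g : Γ) (v : Fin n → M), v ∈ N → g • v ∈ N) →
      N = ⊤ ∨ ∃ c : Fin n → K, c ≠ 0 ∧ ∀ v ∈ N, ∑ i, c i • v i = 0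
  | 0, N, _ => .inl (Subsingleton.elim _ _)
  | n + 1, N, hN => by
    let tail : (Fin (n + 1) → M) →+ (Fin n → M) := AddMonoidHom.mk' Fin.tail fun _ _ => rfl
    rcases eq_top_or_exists_sum_smul_eq_zero hsimple hend (N.map tail)
      (by rintro g _ ⟨v, hv, rfl⟩; exact ⟨g • v, hN g v hv, rfl⟩) with htop | ⟨c, hc0, hc⟩
    · have hsurj : ∀ u : Fin n → M, ∃ v ∈ N, Fin.tail v = u := fun u =>
        (htop ▸ AddSubgroup.mem_top u : u ∈ N.map tail)
      let L := N.comap (AddMonoidHom.single (fun _ => M) 0)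
      rcases hsimple L fun g x hx => by simpa [L, Pi.single_smul'] using hN g _ hx with hL | hL
      · obtain ⟨F, hF, hNF⟩ := exists_map_smul_of_tail_surjective N hN hsurj fun x hx =>
          (AddSubgroup.mem_bot.1 (hL ▸ hx : x ∈ (⊥ : AddSubgroup M)))
        obtain ⟨c, hc⟩ := exists_eq_sum_smul_of_map_smul hend F hF
        refine .inr ⟨Fin.cons (-1) c, fun h => by simpa using congrFun h 0, fun v hv => ?_⟩
        simp [Fin.sum_univ_succ, hNF v hv, hc, Fin.tail]
      · exact .inl (eq_top_of_tail_surjective N hsurj fun x => (hL ▸ AddSubgroup.mem_top x : x ∈ L))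
    · refine .inr ⟨Fin.cons 0 c, fun h => hc0 ?_, fun v hv => ?_⟩
      · exact congrArg Fin.tail h
      · simpa [Fin.sum_univ_succ, Fin.tail] using hc (Fin.tail v) ⟨v, hv, rfl⟩

end StableSubgroups

namespace groupCohomology.IsCocycle₁

variable {Γ M : Type*} [Group Γ] [AddCommGroup M] [DistribMulAction Γ M] {α : Γ → M}

theorem map_mul_of_forall_smul_eq (hα : IsCocycle₁ α) {γ : Γ} (hγ : ∀ x : M, γ • x = x)
    (δ : Γ) : α (γ * δ) = α γ + α δ := by
  rw [hα, hγ, add_comm]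

theorem map_inv_of_forall_smul_eq (hα : IsCocycle₁ α) {γ : Γ} (hγ : ∀ x : M, γ • x = x) :
    α γ⁻¹ = -α γ := by
  rw [← map_inv_of_isCocycle₁ hα, hγ]

theorem map_conj_of_forall_smul_eq (hα : IsCocycle₁ α) (g : Γ) {γ : Γ}
    (hγ : ∀ x : M, γ • x = x) : α (g * γ * g⁻¹) = g • α γ := by
  rw [hα, hα, mul_smul, hγ, map_inv_of_isCocycle₁ hα]
  abel

theorem sum_smul {K ι : Type*} [Semiring K] [Module K M] [SMulCommClass Γ K M] [Fintype ι]
    {α : ι → Γ → M} (hα : ∀ i, IsCocycle₁ (α i)) (c : ι → K) :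
    IsCocycle₁ fun γ => ∑ i, c i • α i γ := fun g h => by
  simp only [hα _ g h, smul_add, Finset.sum_add_distrib, Finset.smul_sum, smul_comm g]

end groupCohomology.IsCocycle₁

open groupCohomology

section Restriction

variable {Γ M ι : Type*} [Group Γ] [AddCommGroup M] [DistribMulAction Γ M]

def restrictionRange (κ : Subgroup Γ) (hκ : ∀ γ ∈ κ, ∀ x : M, γ • x = x) (α : ι → Γ → M)
    (hα : ∀ i, IsCocycle₁ (α i)) : AddSubgroup (ι → M) where
  carrier := (fun γ i => α i γ) '' κ
  zero_mem' := ⟨1, κ.one_mem, funext fun i => map_one_of_isCocycle₁ (hα i)⟩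
  add_mem' := by
    rintro _ _ ⟨γ, hγ, rfl⟩ ⟨δ, hδ, rfl⟩
    exact ⟨γ * δ, κ.mul_mem hγ hδ, funext fun i => (hα i).map_mul_of_forall_smul_eq (hκ γ hγ) δ⟩
  neg_mem' := by
    rintro _ ⟨γ, hγ, rfl⟩
    exact ⟨γ⁻¹, κ.inv_mem hγ, funext fun i => (hα i).map_inv_of_forall_smul_eq (hκ γ hγ)⟩

theorem smul_mem_restrictionRange {κ : Subgroup Γ} [κ.Normal] (hκ : ∀ γ ∈ κ, ∀ x : M, γ • x = x)
    {α : ι → Γ → M} (hα : ∀ i, IsCocycle₁ (α i)) (g : Γ) {v : ι → M}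
    (hv : v ∈ restrictionRange κ hκ α hα) : g • v ∈ restrictionRange κ hκ α hα := by
  obtain ⟨γ, hγ, rfl⟩ := hv
  exact ⟨g * γ * g⁻¹, ‹κ.Normal›.conj_mem γ hγ g,
    funext fun i => (hα i).map_conj_of_forall_smul_eq g (hκ γ hγ)⟩

end Restriction

/-- `H¹(G, M) = 0` is stated through inflation: a continuous cocycle on `Γ` vanishing on `κ` is a
coboundary. -/
theorem stmt7_general
    (Γ : Type*) [Group Γ] [TopologicalSpace Γ]
    (M : Type*) [AddCommGroup M] [TopologicalSpace M] [DiscreteTopology M]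
    [DistribMulAction Γ M]
    (K : Type*) [Field K]
    [Module K M] [SMulCommClass Γ K M]
    (κ : Subgroup Γ) (hκ : ∀ γ : Γ, γ ∈ κ ↔ ∀ x : M, γ • x = x)
    (hsimple : ∀ N : AddSubgroup M, (∀ (g : Γ) (x : M), x ∈ N → g • x ∈ N) → N = ⊥ ∨ N = ⊤)
    (hend : ∀ f : M →+ M, (∀ (g : Γ) (x : M), f (g • x) = g • f x) → ∃ c : K, ∀ x, f x = c • x)
    (hH1 : ∀ c : Γ → M, Continuous c → (∀ g h, c (g * h) = c g + g • c h) →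
      (∀ γ ∈ κ, c γ = 0) → ∃ x : M, ∀ γ, c γ = γ • x - x)
    (n : ℕ) (α : Fin n → Γ → M)
    (hcoc : ∀ i, ∀ g h, α i (g * h) = α i g + g • α i h)
    (hcont : ∀ i, Continuous (α i))
    (hindep : ∀ coef : Fin n → K,
      (∃ x : M, ∀ γ, ∑ i, coef i • α i γ = γ • x - x) → ∀ i, coef i = 0) :
    ∀ v : Fin n → M, ∃ γ ∈ κ, ∀ i, α i γ = v i := by
  have hκ_fix : ∀ γ ∈ κ, ∀ x : M, γ • x = x := fun γ => (hκ γ).1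
  have hκ_normal : κ.Normal := ⟨fun γ hγ g => (hκ _).2 fun x => by
    rw [mul_smul, mul_smul, hκ_fix γ hγ, smul_inv_smul]⟩
  have hα : ∀ i, IsCocycle₁ (α i) := fun i g h => by rw [hcoc, add_comm]
  rcases eq_top_or_exists_sum_smul_eq_zero hsimple hend (restrictionRange κ hκ_fix α hα)
    fun g _ => smul_mem_restrictionRange hκ_fix hα g with htop | ⟨c, hc0, hc⟩
  · intro v
    obtain ⟨γ, hγ, hv⟩ := (htop ▸ AddSubgroup.mem_top v : v ∈ restrictionRange κ hκ_fix α hα)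
    exact ⟨γ, hγ, congrFun hv⟩
  · have hβ := IsCocycle₁.sum_smul hα c
    obtain ⟨x, hx⟩ := hH1 (fun γ => ∑ i, c i • α i γ)
      ((continuous_of_discreteTopology (f := fun v : Fin n → M => ∑ i, c i • v i)).comp
        (continuous_pi hcont))
      (fun g h => (hβ g h).trans (add_comm _ _)) fun γ hγ => hc _ ⟨γ, hγ, rfl⟩
    exact (hc0 (funext (hindep c ⟨x, hx⟩))).elim

/-- Let `Γ` be a profinite group, `M` a finite discrete `Γ`-module with
`pM = 0` (encoded: a module over a finite field `K` of characteristic `p`),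
`κ = ker(Γ → Aut M)`, `G = Γ/κ` finite.  Assume `M` is a simple `G`-module,
`H¹(G, M) = 0` (every continuous cocycle vanishing on `κ` is a coboundary),
and `End_G(M) = K`.  If continuous cocycles `α₁, …, αₙ : Γ → M` represent classes that
are `K`-linearly independent in `H¹(Γ, M)`, then the restriction map
`κ → Mⁿ`, `γ ↦ (α₁ γ, …, αₙ γ)`, is surjective. -/
theorem stmt7 (p : ℕ) (hp : p.Prime)
    (Γ : Type*) [Group Γ] [TopologicalSpace Γ] [IsTopologicalGroup Γ]
    [CompactSpace Γ] [TotallyDisconnectedSpace Γ]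
    (M : Type*) [AddCommGroup M] [Finite M] [TopologicalSpace M] [DiscreteTopology M]
    [DistribMulAction Γ M]
    (K : Type*) [Field K] [Fintype K] (hchar : CharP K p)
    [Module K M] [SMulCommClass Γ K M]
    (κ : Subgroup Γ) (hκ : ∀ γ : Γ, γ ∈ κ ↔ ∀ x : M, γ • x = x)
    [Finite (Γ ⧸ κ)]
    (hsimple : ∀ N : AddSubgroup M, (∀ (g : Γ) (x : M), x ∈ N → g • x ∈ N) → N = ⊥ ∨ N = ⊤)
    (hMnt : Nontrivial M)
    (hend : ∀ f : M →+ M, (∀ (g : Γ) (x : M), f (g • x) = g • f x) → ∃ c : K, ∀ x, f x = c • x)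
    (hH1 : ∀ c : Γ → M, Continuous c → (∀ g h, c (g * h) = c g + g • c h) →
      (∀ γ ∈ κ, c γ = 0) → ∃ x : M, ∀ γ, c γ = γ • x - x)
    (n : ℕ) (α : Fin n → Γ → M)
    (hcoc : ∀ i, ∀ g h, α i (g * h) = α i g + g • α i h)
    (hcont : ∀ i, Continuous (α i))
    (hindep : ∀ coef : Fin n → K,
      (∃ x : M, ∀ γ, ∑ i, coef i • α i γ = γ • x - x) → ∀ i, coef i = 0) :
    ∀ v : Fin n → M, ∃ γ ∈ κ, ∀ i, α i γ = v i :=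
  stmt7_general Γ M K κ hκ hsimple hend hH1 n α hcoc hcont hindep
end

section
/- Let k be a local field of characteristic zero, A an abelian variety over k, F/k a quadratic extension, and A^F the quadratic twist. Then the intersection of the images of the Kummer maps δ(A(k)) ∩ δ^F(A^F(k)) inside H^1(k, A[2]) equals δ(N_{F/k}(A(F))), the image under δ of the norm subgroup of A(k). -/
/-- Galois-cohomological formalization of
`δ(A(k)) ∩ δ^F(A^F(k)) = δ(N_{F/k}(A(F)))`.  Here `Γ = Γ_k` is the absolute Galois group
of the (local, characteristic zero) field `k`, `P = A(k̄)` is the 2-divisible `Γ`-module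
of points of the abelian variety `A`, the quadratic extension `F/k` is given by its
quadratic character `χ : Γ → {±1}` (nontrivial: `χ σ = -1`), so that
`A(k) = P^Γ`, `A(F) = P^{ker χ}`, `A^F(k) = {y : γ • y = χ(γ) y}`, and the norm is
`N(z) = z + σ • z`.  The Kummer class `δ(x)` is represented by the cocycle
`γ ↦ γ • x' - x'` (`x' + x' = x`), the twisted Kummer class `δ^F(y)` by
`γ ↦ γ • y' - χ(γ) y'` (`y' + y' = y`), and two cocycles are cohomologous iff they differ
by `γ ↦ γ • d - d` with `d ∈ A[2]`.  First part: if `δ(x) = δ^F(y)` then `x` is a norm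
from `A(F)`.  Second part: every norm `x = N(z)` satisfies `δ(x) = δ^F(y)` for some
`y ∈ A^F(k)`. -/
theorem stmt15 (Γ : Type*) [Group Γ]
    (P : Type*) [AddCommGroup P] [DistribMulAction Γ P]
    (hdiv : ∀ x : P, ∃ y, y + y = x)
    (χ : Γ →* ℤˣ) (σ : Γ) (hσ : χ σ = -1) :
    (∀ x y x' y' : P,
      (∀ γ : Γ, γ • x = x) →
      (∀ γ : Γ, γ • y = (χ γ : ℤ) • y) →
      x' + x' = x → y' + y' = y →
      (∃ d : P, d + d = 0 ∧
        ∀ γ : Γ, (γ • x' - x') - (γ • y' - (χ γ : ℤ) • y') = γ • d - d) →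
      ∃ z : P, (∀ γ ∈ χ.ker, γ • z = z) ∧ z + σ • z = x) ∧
    (∀ z : P, (∀ γ ∈ χ.ker, γ • z = z) →
      ∃ y : P, (∀ γ : Γ, γ • y = (χ γ : ℤ) • y) ∧
        ∀ x' : P, x' + x' = z + σ • z →
          ∃ y' : P, y' + y' = y ∧
            ∃ d : P, d + d = 0 ∧
              ∀ γ : Γ, (γ • x' - x') - (γ • y' - (χ γ : ℤ) • y') = γ • d - d) := by
  constructor
  · rintro x y x' y' hx hy hx' hy' ⟨d, hd2, hd⟩
    refine ⟨x' - y' - d, ?_, ?_⟩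
    · intro γ hγ
      have hχ : (χ γ : ℤ) = 1 := by
        rw [MonoidHom.mem_ker] at hγ; rw [hγ]; rfl
      have h := hd γ
      rw [hχ, one_smul] at h
      have key : γ • (x' - y' - d) - (x' - y' - d)
          = ((γ • x' - x') - (γ • y' - y')) - (γ • d - d) := by
        rw [smul_sub, smul_sub]; abel
      rw [← sub_eq_zero, key, h, sub_self]
    · have hχ : (χ σ : ℤ) = -1 := by rw [hσ]; rfl
      have h := hd σ
      rw [hχ] at h
      have key : (x' - y' - d) + σ • (x' - y' - d)
          = (((σ • x' - x') - (σ • y' - (-1 : ℤ) • y')) - (σ • d - d))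
            + (x' + x') - (d + d) := by
        rw [smul_sub, smul_sub]; abel
      rw [key, h, sub_self, hx', hd2]
      abel
  · intro z hz
    have hker2 : ∀ γ ∈ χ.ker, γ • σ • z = σ • z := by
      intro γ hγ
      rw [MonoidHom.mem_ker] at hγ
      have hmem : σ⁻¹ * γ * σ ∈ χ.ker := by
        simp [MonoidHom.mem_ker, map_mul, hγ]
      calc γ • σ • z = (γ * σ) • z := smul_smul _ _ _
        _ = (σ * (σ⁻¹ * γ * σ)) • z := by rw [show σ * (σ⁻¹ * γ * σ) = γ * σ by group]
        _ = σ • (σ⁻¹ * γ * σ) • z := (smul_smul _ _ _).symm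
        _ = σ • z := by rw [hz _ hmem]
    have hneg : ∀ γ : Γ, χ γ = -1 → γ • z = σ • z ∧ γ • σ • z = z := by
      intro γ hγ
      constructor
      · have hmem : σ⁻¹ * γ ∈ χ.ker := by
          simp [MonoidHom.mem_ker, map_mul, hγ, hσ]
        calc γ • z = (σ * (σ⁻¹ * γ)) • z := by rw [show σ * (σ⁻¹ * γ) = γ by group]
          _ = σ • (σ⁻¹ * γ) • z := (smul_smul _ _ _).symm
          _ = σ • z := by rw [hz _ hmem]
      · have hmem : γ * σ ∈ χ.ker := by
          simp [MonoidHom.mem_ker, map_mul, hγ, hσ]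
        calc γ • σ • z = (γ * σ) • z := smul_smul _ _ _
          _ = z := hz _ hmem
    refine ⟨z - σ • z, ?_, ?_⟩
    · intro γ
      rcases Int.units_eq_one_or (χ γ) with hχ | hχ
      · have hχ' : ((χ γ : ℤˣ) : ℤ) = 1 := by rw [hχ]; rfl
        have hmem : γ ∈ χ.ker := by rwa [MonoidHom.mem_ker]
        rw [hχ', one_smul, smul_sub, hz _ hmem, hker2 _ hmem]
      · have hχ' : ((χ γ : ℤˣ) : ℤ) = -1 := by rw [hχ]; rfl
        obtain ⟨h1, h2⟩ := hneg γ hχ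
        rw [hχ', neg_one_zsmul, smul_sub, h1, h2]
        abel
    · intro x' hx'
      have hy' : (x' - σ • z) + (x' - σ • z) = z - σ • z := by
        rw [← sub_eq_zero]
        have key : (x' - σ • z) + (x' - σ • z) - (z - σ • z)
            = (x' + x') - (z + σ • z) := by abel
        rw [key, hx', sub_self]
      refine ⟨x' - σ • z, hy', 0, by simp, ?_⟩
      intro γ
      rcases Int.units_eq_one_or (χ γ) with hχ | hχ
      · have hχ' : ((χ γ : ℤˣ) : ℤ) = 1 := by rw [hχ]; rfl
        have hmem : γ ∈ χ.ker := by rwa [MonoidHom.mem_ker]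
        rw [hχ', one_smul, smul_sub, hker2 _ hmem, smul_zero]
        abel
      · have hχ' : ((χ γ : ℤˣ) : ℤ) = -1 := by rw [hχ]; rfl
        obtain ⟨h1, h2⟩ := hneg γ hχ
        rw [hχ', neg_one_zsmul, smul_sub, h2, smul_zero, ← sub_eq_zero]
        have key : γ • x' - x' - (γ • x' - z - -(x' - σ • z)) - (0 - 0)
            = (z + σ • z) - (x' + x') := by abel
        rw [key, ← hx', sub_self]
end

section
/- Let k be a field of characteristic ≠ 2, L a finite field extension of k, and Z the k-scheme defined as the subscheme λ = z² of R_{L/k}(G_m)/{±1} for λ ∈ L*. Then Z has a k-point if and only if λ ∈ k* L*², i.e., λ = t z² for some t ∈ k* and z ∈ L*. -/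
/-!
If `u ∈ L ⊗ Ω` is multiplied by a sign under every `γ ∈ Gal(Ω/k)`, then so is each of its
coordinates with respect to a `k`-basis of `L`, with the same sign. Dividing `u` by a nonzero
coordinate `s` gives a Galois-invariant element, which descends to some `z ∈ L`; hence
`u = z ⊗ s` with `t := s² ∈ k`, and `u² = λ ⊗ 1` becomes `λ = t z²`. Conversely, for `λ = t z²`
take `u = z ⊗ √t`.
-/

open TensorProduct

theorem TensorProduct.equivFinsuppOfBasisLeft_lTensor {R M N N' ι : Type*} [CommSemiring R]
    [AddCommMonoid M] [AddCommMonoid N] [AddCommMonoid N'] [Module R M] [Module R N]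
    [Module R N'] [DecidableEq ι] (b : Module.Basis ι R M) (f : N →ₗ[R] N') (x : M ⊗[R] N) :
    equivFinsuppOfBasisLeft b (f.lTensor M x) =
      (equivFinsuppOfBasisLeft b x).mapRange f f.map_zero := by
  ext i
  induction x with
  | zero => simp
  | tmul m n => simp
  | add x y hx hy => simp_all

section GaloisDescent

variable {k M Ω : Type*} [Field k] [AddCommGroup M] [Module k M] [Field Ω] [Algebra k Ω]
  [IsGalois k Ω]

theorem exists_tmul_one_eq_of_forall_lTensor_eq {w : M ⊗[k] Ω}
    (hw : ∀ γ : Ω ≃ₐ[k] Ω, γ.toLinearMap.lTensor M w = w) : ∃ x : M, x ⊗ₜ[k] (1 : Ω) = w := by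
  classical
  let b := Module.Basis.ofVectorSpace k M
  set c := equivFinsuppOfBasisLeft b w
  have hc : ∀ i, c i ∈ Set.range (algebraMap k Ω) := fun i =>
    (InfiniteGalois.mem_range_algebraMap_iff_fixed _).2 fun γ => by
      simpa [c, hw γ] using (congr($(equivFinsuppOfBasisLeft_lTensor b γ.toLinearMap w) i)).symm
  choose d hd using hc
  refine ⟨c.sum fun i _ => d i • b i, ?_⟩
  conv_rhs => rw [← (equivFinsuppOfBasisLeft b).symm_apply_apply w,
    equivFinsuppOfBasisLeft_symm_apply]
  rw [Finsupp.sum, Finsupp.sum, sum_tmul]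
  refine Finset.sum_congr rfl fun i _ => ?_
  rw [smul_tmul, Algebra.smul_def, mul_one, hd]

variable {A : Type*} [Ring A] [Algebra k A]

theorem exists_eq_tmul_of_forall_map_eq_or_eq_neg {u : A ⊗[k] Ω} (hu : u ≠ 0)
    (hγ : ∀ γ : Ω ≃ₐ[k] Ω,
      Algebra.TensorProduct.map (AlgHom.id k A) γ.toAlgHom u = u ∨
      Algebra.TensorProduct.map (AlgHom.id k A) γ.toAlgHom u = -u) :
    ∃ (z : A) (s : Ω) (t : k), s ≠ 0 ∧ s * s = algebraMap k Ω t ∧ u = z ⊗ₜ s := by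
  classical
  let b := Module.Basis.ofVectorSpace k A
  obtain ⟨i, hi⟩ : ∃ i, equivFinsuppOfBasisLeft b u i ≠ 0 := by
    by_contra! h
    exact hu ((equivFinsuppOfBasisLeft b).map_eq_zero_iff.1 (Finsupp.ext h))
  set s := equivFinsuppOfBasisLeft b u i
  have hγs : ∀ γ : Ω ≃ₐ[k] Ω,
      γ s = equivFinsuppOfBasisLeft b (Algebra.TensorProduct.map (AlgHom.id k A) γ.toAlgHom u) i :=
    fun γ => (congr($(equivFinsuppOfBasisLeft_lTensor b γ.toLinearMap u) i)).symm
  obtain ⟨t, ht⟩ := (InfiniteGalois.mem_range_algebraMap_iff_fixed (s * s)).2 fun γ => by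
    rcases hγ γ with h | h <;> simp [hγs, h, s]
  obtain ⟨z, hz⟩ := exists_tmul_one_eq_of_forall_lTensor_eq (w := u * (1 ⊗ₜ s⁻¹)) fun γ => by
    change Algebra.TensorProduct.map (AlgHom.id k A) γ.toAlgHom _ = _
    rcases hγ γ with h | h <;> simp [h, hγs, s, tmul_neg]
  refine ⟨z, s, t, hi, ht.symm, ?_⟩
  calc u = u * (1 ⊗ₜ s⁻¹) * (1 ⊗ₜ s) := by
        rw [mul_assoc, Algebra.TensorProduct.tmul_mul_tmul, one_mul, inv_mul_cancel₀ hi,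
          ← Algebra.TensorProduct.one_def, mul_one]
    _ = z ⊗ₜ s := by rw [← hz, Algebra.TensorProduct.tmul_mul_tmul, mul_one, one_mul]

end GaloisDescent

theorem Algebra.TensorProduct.tmul_mul_self_of_mul_self_eq_algebraMap {k A Ω : Type*}
    [CommSemiring k] [Semiring A] [Algebra k A] [Semiring Ω] [Algebra k Ω] (z : A) {s : Ω} {t : k}
    (hst : s * s = algebraMap k Ω t) :
    (z ⊗ₜ[k] s) * (z ⊗ₜ[k] s) = (algebraMap k A t * (z * z)) ⊗ₜ[k] (1 : Ω) := by
  rw [tmul_mul_tmul, hst, Algebra.algebraMap_eq_smul_one, tmul_smul, smul_tmul',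
    ← Algebra.smul_def]

theorem stmt19_general (k L Ω : Type*) [Field k] [Field L] [Field Ω]
    [Algebra k L] [Algebra k Ω] [IsSepClosure k Ω]
    (hchar : ringChar k ≠ 2)
    (lam : L) (hlam : lam ≠ 0) :
    (∃ u : L ⊗[k] Ω, u * u = lam ⊗ₜ[k] (1 : Ω) ∧
      ∀ γ : Ω ≃ₐ[k] Ω,
        Algebra.TensorProduct.map (AlgHom.id k L) γ.toAlgHom u = u ∨
        Algebra.TensorProduct.map (AlgHom.id k L) γ.toAlgHom u = -u)
    ↔ (∃ t : k, t ≠ 0 ∧ ∃ z : L, z ≠ 0 ∧ lam = algebraMap k L t * (z * z)) := by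
  have tmul_one_injective := Algebra.TensorProduct.includeLeft_injective (S := k) (A := L)
    (algebraMap k Ω).injective
  constructor
  · rintro ⟨u, hu, hγ⟩
    have hu0 : u ≠ 0 := by
      rintro rfl
      exact hlam (tmul_one_injective (by simpa using hu.symm))
    obtain ⟨z, s, t, hs, hst, rfl⟩ := exists_eq_tmul_of_forall_map_eq_or_eq_neg hu0 hγ
    refine ⟨t, ?_, z, ?_, tmul_one_injective ?_⟩
    · rintro rfl
      simp [hs] at hst
    · rintro rfl
      simp at hu0
    · simpa [← Algebra.TensorProduct.tmul_mul_self_of_mul_self_eq_algebraMap z hst] using hu.symm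
  · rintro ⟨t, -, z, -, rfl⟩
    have := IsSepClosure.sep_closed k (K := Ω)
    have : NeZero (2 : Ω) := ⟨Ring.two_ne_zero (Algebra.ringChar_eq k Ω ▸ hchar)⟩
    obtain ⟨s, hs⟩ := IsSepClosed.exists_eq_mul_self (algebraMap k Ω t)
    refine ⟨z ⊗ₜ s, Algebra.TensorProduct.tmul_mul_self_of_mul_self_eq_algebraMap z hs.symm,
      fun γ => ?_⟩
    have hγs : γ s * γ s = s * s := by rw [← map_mul, ← hs, AlgEquiv.commutes]
    rcases mul_self_eq_mul_self_iff.1 hγs with h | h <;> simp [h, tmul_neg]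

/-- Let `k` be a field of characteristic `≠ 2`, `L/k` a finite
(separable, as `L` is an étale `k`-algebra in the source) field extension, `λ ∈ L*`, and
`Z ⊂ R_{L/k}(𝔾ₘ)/{±1}` the `k`-torsor for `R_{L/k}(μ₂)/μ₂` given by `λ = z²`.  Then `Z`
has a `k`-point iff `λ ∈ k^* L^{*2}`, i.e. `λ = t z²` for some `t ∈ k^*`, `z ∈ L^*`.
A `k`-point of `Z` is formalized by Galois descent: fixing a separable closure `Ω` of
`k`, it is an element `u` of `(L ⊗_k Ω)^*`, taken up to sign, with `u² = λ ⊗ 1` which is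
fixed up to sign by every element of `Gal(Ω/k)` (acting through the second factor). -/
theorem stmt19 (k L Ω : Type*) [Field k] [Field L] [Field Ω]
    [Algebra k L] [FiniteDimensional k L] [Algebra.IsSeparable k L]
    [Algebra k Ω] [IsSepClosure k Ω]
    (hchar : ringChar k ≠ 2)
    (lam : L) (hlam : lam ≠ 0) :
    (∃ u : L ⊗[k] Ω, u * u = lam ⊗ₜ[k] (1 : Ω) ∧
      ∀ γ : Ω ≃ₐ[k] Ω,
        Algebra.TensorProduct.map (AlgHom.id k L) γ.toAlgHom u = u ∨
        Algebra.TensorProduct.map (AlgHom.id k L) γ.toAlgHom u = -u)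
    ↔ (∃ t : k, t ≠ 0 ∧ ∃ z : L, z ≠ 0 ∧ lam = algebraMap k L t * (z * z)) :=
  stmt19_general k L Ω hchar lam hlam
end
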